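/- Let Ω be a commutative Girard quantale. For every Ω-functor ψ : Ω → Ω (where Ω carries the hom Ω(a,b) = a → b), one has ⋀_{t∈Ω} (ψ(t) → t) = ψ(0) → 0. -/
import Mathlib


/-- A commutative unital quantale: a complete lattice with a commutative
monoid structure whose multiplication distributes over arbitrary joins. -/
class CommQuantale (Q : Type*) extends CompleteLattice Q, CommMonoid Q where
  mul_sSup : ∀ (a : Q) (s : Set Q), a * sSup s = ⨆ b ∈ s, a * b

/-- The residuation `a → b = ⋁ {c | a * c ≤ b}`. -/
def qres {Q : Type*} [CommQuantale Q] (a b : Q) : Q := sSup {c | a * c ≤ b}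

lemma qmul_mono_right {Q : Type*} [CommQuantale Q] (a : Q) {c d : Q} (h : c ≤ d) :
    a * c ≤ a * d := by
  have h1 : sSup ({c, d} : Set Q) = d := by
    rw [sSup_pair, sup_eq_right.mpr h]
  have h2 := CommQuantale.mul_sSup a ({c, d} : Set Q)
  rw [h1] at h2
  rw [h2]
  exact le_iSup₂ (f := fun b (_ : b ∈ ({c, d} : Set Q)) => a * b) c (by simp)

lemma qmul_qres_le {Q : Type*} [CommQuantale Q] (a b : Q) : a * qres a b ≤ b := by
  rw [qres, CommQuantale.mul_sSup]
  exact iSup₂_le fun c hc => hc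

lemma le_qres_iff {Q : Type*} [CommQuantale Q] {a b c : Q} :
    c ≤ qres a b ↔ a * c ≤ b := by
  constructor
  · intro h
    exact le_trans (qmul_mono_right a h) (qmul_qres_le a b)
  · intro h
    exact le_sSup h

/-- In a commutative Girard quantale, every Ω-functor ψ : Ω → Ω has infimum
⋀ₜ (ψ t → t) = ψ 0 → 0. -/
theorem girard_inf_formula {Q : Type*} [CommQuantale Q]
    (hgirard : ∀ α : Q, qres (qres α ⊥) ⊥ = α)
    (ψ : Q → Q) (hψ : ∀ a b : Q, qres a b ≤ qres (ψ a) (ψ b)) :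
    (⨅ t : Q, qres (ψ t) t) = qres (ψ ⊥) ⊥ := by
  apply le_antisymm
  · exact iInf_le _ ⊥
  · refine le_iInf fun t => ?_
    rw [le_qres_iff]
    conv_rhs => rw [← hgirard t]
    rw [le_qres_iff]
    have h1 : ψ t * qres t ⊥ ≤ ψ ⊥ := by
      calc ψ t * qres t ⊥ ≤ ψ t * qres (ψ t) (ψ ⊥) := qmul_mono_right _ (hψ t ⊥)
        _ ≤ ψ ⊥ := qmul_qres_le _ _
    calc qres t ⊥ * (ψ t * qres (ψ ⊥) ⊥)
        = (ψ t * qres t ⊥) * qres (ψ ⊥) ⊥ := by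
          rw [← mul_assoc, mul_comm (qres t ⊥) (ψ t)]
      _ ≤ ψ ⊥ * qres (ψ ⊥) ⊥ := by
          rw [mul_comm (ψ t * qres t ⊥), mul_comm (ψ ⊥)]
          exact qmul_mono_right _ h1
      _ ≤ ⊥ := qmul_qres_le _ _
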